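/- arXiv:1806.11007 — 5 statements merged into one kernel-verified Lean document; each statement's English description precedes it below -/
import Mathlib

section
/- If v ⊑_LU v' and v(x) - v(y) < c for a guard x - y ◁ c with L(x-y) ≤ c ≤ U(x-y), then v'(x) - v'(y) < c (and similarly for non-strict guards): any guard compatible with the LU-bounds that is satisfied by v is also satisfied by v'. -/
/-- The LU-preorder: `v ⊑_LU v'` iff for every pair of distinct clocks `x, y`,
if `v x - v y < L x y` then `v' x - v' y < L x y`, and
if `L x y ≤ v x - v y ≤ U x y` then `v' x - v' y ≤ v x - v y`. -/
def LUsim {X : Type*} (L U : X → X → EReal) (v v' : X → ℝ) : Prop :=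
  ∀ x y : X, x ≠ y →
    (((v x - v y : ℝ) : EReal) < L x y → ((v' x - v' y : ℝ) : EReal) < L x y) ∧
    ((L x y ≤ ((v x - v y : ℝ) : EReal) ∧ ((v x - v y : ℝ) : EReal) ≤ U x y) →
      v' x - v' y ≤ v x - v y)

/-- Below `L(x-y)` the difference of `v'` stays below `L(x-y) ≤ c`; between `L(x-y)` and
`c ≤ U(x-y)` it can only decrease. Either way `v'` does not overshoot `c`. -/
theorem LUsim.sub_le_or_sub_lt {X : Type*} {L U : X → X → EReal} {v v' : X → ℝ}
    (h : LUsim L U v v') {x y : X} (hxy : x ≠ y) {c : ℝ}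
    (hL : L x y ≤ c) (hU : (c : EReal) ≤ U x y) (hv : v x - v y ≤ c) :
    v' x - v' y ≤ v x - v y ∨ v' x - v' y < c := by
  obtain ⟨below_L, between_LU⟩ := h x y hxy
  rcases lt_or_ge ((v x - v y : ℝ) : EReal) (L x y) with hlt | hge
  · exact Or.inr (EReal.coe_lt_coe_iff.mp ((below_L hlt).trans_le hL))
  · exact Or.inl (between_LU ⟨hge, (EReal.coe_le_coe_iff.mpr hv).trans hU⟩)

/-- Any guard `x - y ◁ c` compatible with the LU-bounds (`L(x-y) ≤ c ≤ U(x-y)`)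
that is satisfied by `v` is also satisfied by `v'`, whenever `v ⊑_LU v'`. -/
theorem lu_sim_preserves_guards {X : Type*} (L U : X → X → EReal) (v v' : X → ℝ)
    (h : LUsim L U v v') (x y : X) (hxy : x ≠ y) (c : ℤ)
    (hL : L x y ≤ ((c : ℝ) : EReal)) (hU : ((c : ℝ) : EReal) ≤ U x y) :
    (v x - v y < (c : ℝ) → v' x - v' y < (c : ℝ)) ∧
    (v x - v y ≤ (c : ℝ) → v' x - v' y ≤ (c : ℝ)) := by
  refine ⟨fun hv => ?_, fun hv => ?_⟩
  · rcases h.sub_le_or_sub_lt hxy hL hU hv.le with hle | hlt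
    exacts [hle.trans_lt hv, hlt]
  · rcases h.sub_le_or_sub_lt hxy hL hU hv with hle | hlt
    exacts [hle.trans hv, hlt.le]
end

section
/- A distance graph has a nonempty solution set iff it has no negative cycle: ⟦G⟧ ≠ ∅ if and only if every cycle in G has weight sum strictly greater than (<, 0). -/
/-- Weights `(◁, c)` modelled as `Bool × EReal` (`true` = strict). -/
def wsat (r : ℝ) (w : Bool × EReal) : Prop :=
  if w.1 then ((r : EReal) < w.2) else ((r : EReal) ≤ w.2)

/-- Strict order on weights. -/
def wlt (w₁ w₂ : Bool × EReal) : Prop :=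
  w₁.2 < w₂.2 ∨ (w₁.2 = w₂.2 ∧ w₁.1 = true ∧ w₂.1 = false)

/-- Weight addition: constants add, result strict iff some summand is strict. -/
noncomputable def wadd (w₁ w₂ : Bool × EReal) : Bool × EReal := (w₁.1 || w₂.1, w₁.2 + w₂.2)

/-- The weight of the path `a → c₁ → ⋯ → cₖ → b` through the graph `G`. -/
noncomputable def pathW {V : Type*} (G : V → V → Bool × EReal) : V → List V → V → Bool × EReal
  | a, [], b => G a b
  | a, c :: l, b => wadd (G a c) (pathW G c l b)

/-- `⟦G⟧`: valuations with the zero vertex `z` at `0` satisfying all edge constraints. -/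
def sem {V : Type*} (z : V) (G : V → V → Bool × EReal) : Set (V → ℝ) :=
  {v | v z = 0 ∧ ∀ x y : V, wsat (v y - v x) (G x y)}

/-!
A solution telescopes along a cycle of weight `(◁, c)` to `0 ◁ c`, so it rules out negative
cycles. Conversely, encode a finite weight `(◁, c)` as the element `(c, -1)` (if `◁` is strict) or
`(c, 0)` of the lexicographically ordered group `ℝ ×ₗ ℝ`, and `∞` as `⊤`: a cycle is negative
exactly when its lexicographic cost is. If no cycle is, cutting cycles out of a walk never
increases its cost, so the least cost `q x` of a walk starting at `x` is attained among walks
with at most `|V|` vertices, and `q x ≤ w x y + q y` for the encoded weights `w`. Writing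
`q x = (q₁ x, q₂ x)`, the valuation `x ↦ -(q₁ x + δ q₂ x)` solves `G` for every small enough
`δ > 0`.
-/

open Filter Topology

theorem List.exists_eq_append_cons_append_cons_of_not_nodup {α : Type*} :
    ∀ {L : List α}, ¬L.Nodup → ∃ s u m t, L = s ++ u :: (m ++ u :: t)
  | [], h => absurd List.nodup_nil h
  | a :: l, h => by
    by_cases ha : a ∈ l
    · obtain ⟨m, t, rfl⟩ := List.append_of_mem ha
      exact ⟨[], a, m, t, rfl⟩
    · obtain ⟨s, u, m, t, rfl⟩ :=
        exists_eq_append_cons_append_cons_of_not_nodup fun hl => h (hl.cons ha)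
      exact ⟨a :: s, u, m, t, rfl⟩

section WalkCost

variable {V M : Type*} [AddCommMonoid M] (w : V → V → M)

def walkCost : List V → M
  | a :: b :: l => w a b + walkCost (b :: l)
  | _ => 0

theorem walkCost_append_cons :
    ∀ (s : List V) (u : V) (t : List V),
      walkCost w (s ++ u :: t) = walkCost w (s ++ [u]) + walkCost w (u :: t)
  | [], _, _ => by simp [walkCost]
  | [_], _, _ => by simp [walkCost]
  | a :: b :: s, u, t => by
    simp only [List.cons_append, walkCost, add_assoc]
    rw [← List.cons_append, walkCost_append_cons (b :: s) u t, List.cons_append]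

variable [Fintype V]

theorem exists_walkCost_le_of_length_le_card [PartialOrder M] [IsOrderedAddMonoid M]
    (hcyc : ∀ u m, 0 ≤ walkCost w (u :: (m ++ [u]))) (L : List V) :
    ∃ L', L'.length ≤ Fintype.card V ∧ L'.head? = L.head? ∧ walkCost w L' ≤ walkCost w L := by
  by_cases hL : L.length ≤ Fintype.card V
  · exact ⟨L, hL, rfl, le_rfl⟩
  obtain ⟨s, u, m, t, hsplit⟩ := List.exists_eq_append_cons_append_cons_of_not_nodup
    fun hnd => hL hnd.length_le_card
  obtain ⟨L', hlen, hhead, hcost⟩ := exists_walkCost_le_of_length_le_card hcyc (s ++ u :: t)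
  subst hsplit
  refine ⟨L', hlen, by simp [hhead, List.head?_append], hcost.trans ?_⟩
  calc walkCost w (s ++ u :: t)
      = walkCost w (s ++ [u]) + walkCost w (u :: t) := walkCost_append_cons w s u t
    _ ≤ walkCost w (s ++ [u]) + (walkCost w (u :: (m ++ [u])) + walkCost w (u :: t)) := by
      gcongr; exact le_add_of_nonneg_left (hcyc u m)
    _ = walkCost w (s ++ u :: (m ++ u :: t)) := by
      rw [walkCost_append_cons w s u (m ++ u :: t)]
      exact congrArg _ (walkCost_append_cons w (u :: m) u t).symm
termination_by L.length
decreasing_by simp [hsplit]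

theorem exists_nonpos_le_add_of_walkCost_cycle_nonneg [LinearOrder M] [IsOrderedAddMonoid M]
    (hcyc : ∀ u m, 0 ≤ walkCost w (u :: (m ++ [u]))) :
    ∃ q : V → M, (∀ x, q x ≤ 0) ∧ ∀ x y, q x ≤ w x y + q y := by
  let short : Set (List V) := {l | l.length < Fintype.card V}
  have hfin : short.Finite :=
    (List.finite_length_le V (Fintype.card V)).subset fun _ hl => Nat.le_of_lt hl
  have hnil (x : V) : [] ∈ short := Fintype.card_pos_iff.2 ⟨x⟩
  choose l _ hmin using fun x =>
    Set.exists_min_image short (fun l => walkCost w (x :: l)) hfin ⟨[], hnil x⟩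
  refine ⟨fun x => walkCost w (x :: l x), fun x => hmin x [] (hnil x), fun x y => ?_⟩
  obtain ⟨L, hlen, hhead, hle⟩ := exists_walkCost_le_of_length_le_card w hcyc (x :: y :: l y)
  obtain ⟨l', rfl⟩ : ∃ l', L = x :: l' := by
    cases L with
    | nil => simp at hhead
    | cons a l' => exact ⟨l', by simpa using hhead⟩
  exact (hmin x l' (Nat.lt_of_succ_le hlen)).trans hle

end WalkCost

lemma wsat_wadd {r s : ℝ} {w₁ w₂ : Bool × EReal} (h₁ : wsat r w₁) (h₂ : wsat s w₂) :
    wsat (r + s) (wadd w₁ w₂) := by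
  have lt_le {r s : ℝ} {c₁ c₂ : EReal} (h₁ : (r : EReal) < c₁) (h₂ : (s : EReal) ≤ c₂) :
      ((r + s : ℝ) : EReal) < c₁ + c₂ :=
    EReal.coe_add r s ▸ EReal.add_lt_add_of_lt_of_le' h₁ h₂
      (ne_bot_of_le_ne_bot (EReal.coe_ne_bot s) h₂) fun _ hs => absurd hs (EReal.coe_ne_top s)
  obtain ⟨_ | _, c₁⟩ := w₁ <;> obtain ⟨_ | _, c₂⟩ := w₂ <;>
    simp only [wsat, wadd, Bool.or_false, Bool.or_true, Bool.false_eq_true, if_true, if_false]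
      at h₁ h₂ ⊢
  · exact EReal.coe_add r s ▸ add_le_add h₁ h₂
  · rw [add_comm r, add_comm c₁]; exact lt_le h₂ h₁
  · exact lt_le h₁ h₂
  · exact EReal.coe_add r s ▸ EReal.add_lt_add h₁ h₂

lemma wsat_pathW {V : Type*} {G : V → V → Bool × EReal} {v : V → ℝ}
    (hv : ∀ x y, wsat (v y - v x) (G x y)) (a : V) (l : List V) (b : V) :
    wsat (v b - v a) (pathW G a l b) := by
  induction l generalizing a with
  | nil => exact hv a b
  | cons c l ih => exact sub_add_sub_cancel' (v c) (v a) (v b) ▸ wsat_wadd (hv a c) (ih c)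

lemma wlt_of_wsat_zero {w : Bool × EReal} (h : wsat 0 w) : wlt (true, 0) w := by
  obtain ⟨_ | _, c⟩ := w <;> simp only [wsat, wlt, EReal.coe_zero] at h ⊢
  · rcases h.lt_or_eq with h | h
    · exact Or.inl h
    · exact Or.inr ⟨h, trivial, trivial⟩
  · exact Or.inl h

noncomputable def lexWeight (w : Bool × EReal) : WithTop (Lex (ℝ × ℝ)) :=
  if w.2 = ⊤ then ⊤ else ↑(toLex (w.2.toReal, if w.1 then (-1 : ℝ) else 0))

/-- `wadd` combines strictness flags by `||`, the lexicographic cost by `+`, so a path weight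
determines only the sign of the second coordinate of its cost. -/
def LexRep (w : Bool × EReal) (x : WithTop (Lex (ℝ × ℝ))) : Prop :=
  w.2 = ⊤ ∧ x = ⊤ ∨ ∃ r s : ℝ, w.2 = r ∧ x = toLex (r, s) ∧ s ≤ 0 ∧ (w.1 = true ↔ s < 0)

lemma lexRep_lexWeight {w : Bool × EReal} (hw : w.2 ≠ ⊥) : LexRep w (lexWeight w) := by
  obtain ⟨b, c⟩ := w
  by_cases hc : c = ⊤
  · exact Or.inl ⟨hc, by simp [lexWeight, hc]⟩
  lift c to ℝ using ⟨hc, hw⟩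
  refine Or.inr ⟨c, if b then -1 else 0, rfl, by simp [lexWeight], ?_, ?_⟩ <;> cases b <;> norm_num

lemma LexRep.snd_ne_bot {w : Bool × EReal} {x : WithTop (Lex (ℝ × ℝ))} (h : LexRep w x) :
    w.2 ≠ ⊥ := by
  rcases h with ⟨h, -⟩ | ⟨r, -, h, -⟩ <;> simp [h]

lemma LexRep.wadd {w₁ w₂ : Bool × EReal} {x₁ x₂ : WithTop (Lex (ℝ × ℝ))}
    (h₁ : LexRep w₁ x₁) (h₂ : LexRep w₂ x₂) : LexRep (wadd w₁ w₂) (x₁ + x₂) := by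
  rcases h₁ with ⟨ht₁, rfl⟩ | ⟨r₁, s₁, hr₁, rfl, hs₁, hb₁⟩
  · exact Or.inl ⟨by simp [_root_.wadd, ht₁, EReal.top_add_of_ne_bot h₂.snd_ne_bot], top_add _⟩
  rcases h₂ with ⟨ht₂, rfl⟩ | ⟨r₂, s₂, hr₂, rfl, hs₂, hb₂⟩
  · exact Or.inl ⟨by simp [_root_.wadd, ht₂, hr₁], add_top _⟩
  refine Or.inr ⟨r₁ + r₂, s₁ + s₂, by simp [_root_.wadd, hr₁, hr₂], rfl, by linarith, ?_⟩
  simp only [_root_.wadd, Bool.or_eq_true, hb₁, hb₂]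
  constructor
  · rintro (h | h) <;> linarith
  · intro h; by_contra! h'; linarith [h'.1, h'.2]

lemma LexRep.nonneg_of_wlt {w : Bool × EReal} {x : WithTop (Lex (ℝ × ℝ))} (h : LexRep w x)
    (hw : wlt (true, 0) w) : 0 ≤ x := by
  rcases h with ⟨-, rfl⟩ | ⟨r, s, hr, rfl, hs, hb⟩
  · exact le_top
  rw [WithTop.coe_nonneg, Prod.Lex.le_iff]
  simp only [wlt, hr] at hw
  simp only [ofLex_zero, ofLex_toLex, Prod.fst_zero, Prod.snd_zero]
  rcases hw with hr0 | ⟨hr0, -, hnonstrict⟩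
  · exact Or.inl (EReal.coe_pos.1 hr0)
  · refine Or.inr ⟨(EReal.coe_eq_zero.1 hr0.symm).symm, not_lt.1 fun hs' => ?_⟩
    simp [hb.2 hs'] at hnonstrict

lemma lexRep_pathW {V : Type*} {G : V → V → Bool × EReal} (hG : ∀ x y, (G x y).2 ≠ ⊥)
    (a : V) (l : List V) (b : V) :
    LexRep (pathW G a l b) (walkCost (fun x y => lexWeight (G x y)) (a :: (l ++ [b]))) := by
  induction l generalizing a with
  | nil => simpa [walkCost, pathW] using lexRep_lexWeight (hG a b)
  | cons c l ih => exact (lexRep_lexWeight (hG a c)).wadd (ih c)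

lemma snd_ne_bot_of_forall_wlt {V : Type*} {G : V → V → Bool × EReal}
    (hcyc : ∀ a l, wlt (true, 0) (pathW G a l a)) (x y : V) : (G x y).2 ≠ ⊥ := by
  intro h
  simpa [wlt, pathW, wadd, h] using hcyc x [y]

lemma eventually_wsat_of_le_lexWeight_add {a b : Lex (ℝ × ℝ)} {w : Bool × EReal} (hw : w.2 ≠ ⊥)
    (h : (a : WithTop (Lex (ℝ × ℝ))) ≤ lexWeight w + b) :
    ∀ᶠ δ in 𝓝[>] (0 : ℝ),
      wsat ((ofLex a).1 + δ * (ofLex a).2 - ((ofLex b).1 + δ * (ofLex b).2)) w := by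
  obtain ⟨β, c⟩ := w
  by_cases hc : c = ⊤
  · refine Eventually.of_forall fun δ => ?_
    cases β
    · exact hc ▸ le_top
    · exact hc ▸ EReal.coe_lt_top _
  lift c to ℝ using ⟨hc, hw⟩
  simp only [lexWeight, EReal.coe_ne_top, if_false, EReal.toReal_coe, ← WithTop.coe_add,
    WithTop.coe_le_coe, Prod.Lex.le_iff, ofLex_add, ofLex_toLex, Prod.fst_add, Prod.snd_add] at h
  rcases h with hlt | ⟨heq, hle⟩
  · have hcont : Continuous fun δ : ℝ =>
        (ofLex a).1 + δ * (ofLex a).2 - ((ofLex b).1 + δ * (ofLex b).2) := by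
      fun_prop
    filter_upwards [nhdsWithin_le_nhds ((hcont.tendsto 0).eventually
      (gt_mem_nhds (show _ < c by simp only [zero_mul, add_zero]; linarith)))] with δ hδ
    cases β
    · exact EReal.coe_le_coe_iff.2 hδ.le
    · exact EReal.coe_lt_coe_iff.2 hδ
  · filter_upwards [self_mem_nhdsWithin] with δ (hδ : 0 < δ)
    cases β <;> simp only [wsat, EReal.coe_le_coe_iff, EReal.coe_lt_coe_iff, if_true, if_false,
      Bool.false_eq_true] at hle ⊢ <;> nlinarith

theorem sem_nonempty_of_forall_wlt {V : Type*} [Fintype V] (z : V) (G : V → V → Bool × EReal)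
    (hcyc : ∀ a l, wlt (true, 0) (pathW G a l a)) : (sem z G).Nonempty := by
  have hG := snd_ne_bot_of_forall_wlt hcyc
  obtain ⟨q, hq0, hq⟩ := exists_nonpos_le_add_of_walkCost_cycle_nonneg
    (fun x y => lexWeight (G x y)) fun u m => (lexRep_pathW hG u m u).nonneg_of_wlt (hcyc u m)
  choose p hp using fun x =>
    WithTop.ne_top_iff_exists.1 (ne_top_of_le_ne_top WithTop.zero_ne_top (hq0 x))
  let f (δ : ℝ) (x : V) : ℝ := (ofLex (p x)).1 + δ * (ofLex (p x)).2
  have hδ : ∀ᶠ δ in 𝓝[>] (0 : ℝ), ∀ x y, wsat (f δ x - f δ y) (G x y) := by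
    simp only [eventually_all]
    intro x y
    exact eventually_wsat_of_le_lexWeight_add (hG x y) (hp x ▸ hp y ▸ hq x y)
  obtain ⟨δ, hδ⟩ := hδ.exists
  exact ⟨fun x => f δ z - f δ x, sub_self _, fun x y => by simpa using hδ x y⟩

theorem sem_nonempty_iff_no_negative_cycle_general {V : Type*} [Fintype V] (z : V)
    (G : V → V → Bool × EReal) :
    (sem z G).Nonempty ↔
      ∀ (a : V) (l : List V), wlt (true, (0 : EReal)) (pathW G a l a) := by
  refine ⟨fun ⟨v, _, hv⟩ a l => wlt_of_wsat_zero ?_, sem_nonempty_of_forall_wlt z G⟩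
  simpa using wsat_pathW hv a l a

/-- A distance graph has a nonempty solution set iff it has no negative cycle:
`⟦G⟧ ≠ ∅` iff every cycle has weight sum strictly greater than `(<, 0)`. -/
theorem sem_nonempty_iff_no_negative_cycle {V : Type*} [Fintype V] (z : V)
    (G : V → V → Bool × EReal)
    (hG : ∀ x y : V, (∃ c : ℤ, (G x y).2 = ((c : ℝ) : EReal)) ∨ G x y = (true, ⊤)) :
    (sem z G).Nonempty ↔
      ∀ (a : V) (l : List V), wlt (true, (0 : EReal)) (pathW G a l a) :=
  sem_nonempty_iff_no_negative_cycle_general z G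
end

section
/- For every valuation v and LU-bounds function, the set of valuations satisfying the distance graph G⟨v⟩ (with edge y → x of weight (<, L(x−y)) when v(x) − v(y) < L(x−y), and weight (≤, v(x) − v(y)) when L(x−y) ≤ v(x) − v(y) ≤ U(x−y), and no constraint otherwise) equals the set { v' : v ⊑_LU v' } of valuations simulating v. -/
open Classical

/-- The distance graph `G⟨v⟩` for `⟨v⟩_LU`: the edge `y → x` has weight
`(<, L(x-y))` if `v x - v y < L(x-y)`, weight `(≤, v x - v y)` if
`L(x-y) ≤ v x - v y ≤ U(x-y)`, and no constraint `(<, ∞)` otherwise. -/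
noncomputable def Gv {X : Type*} (L U : X → X → EReal) (v : X → ℝ) (y x : X) :
    Bool × EReal :=
  if ((v x - v y : ℝ) : EReal) < L x y then (true, L x y)
  else if L x y ≤ ((v x - v y : ℝ) : EReal) ∧ ((v x - v y : ℝ) : EReal) ≤ U x y then
    (false, ((v x - v y : ℝ) : EReal))
  else (true, ⊤)

theorem wsat_Gv_iff {X : Type*} (L U : X → X → EReal) (v : X → ℝ) (x y : X) (r : ℝ) :
    wsat r (Gv L U v y x) ↔
      (((v x - v y : ℝ) : EReal) < L x y → (r : EReal) < L x y) ∧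
      ((L x y ≤ ((v x - v y : ℝ) : EReal) ∧ ((v x - v y : ℝ) : EReal) ≤ U x y) →
        r ≤ v x - v y) := by
  unfold Gv wsat
  by_cases hlt : ((v x - v y : ℝ) : EReal) < L x y
  · rw [if_pos hlt]
    have hnot_mid : ¬ L x y ≤ ((v x - v y : ℝ) : EReal) := not_le.mpr hlt
    simp only [if_true, hlt, hnot_mid, true_implies, false_and, false_implies, and_true]
  · rw [if_neg hlt]
    by_cases hmid : L x y ≤ ((v x - v y : ℝ) : EReal) ∧ ((v x - v y : ℝ) : EReal) ≤ U x y
    · rw [if_pos hmid]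
      simp only [Bool.false_eq_true, if_false, EReal.coe_le_coe_iff, hlt, hmid, false_implies,
        true_implies, true_and]
    · rw [if_neg hmid]
      simp only [if_true, EReal.coe_lt_top, hlt, hmid, false_implies, and_self]

theorem sem_Gv_eq_up_general {X : Type*} (z : X) (L U : X → X → EReal) (v : X → ℝ) :
    {v' : X → ℝ | v' z = 0 ∧ (∀ x : X, 0 ≤ v' x) ∧
        ∀ x y : X, x ≠ y → wsat (v' x - v' y) (Gv L U v y x)}
      = {v' : X → ℝ | v' z = 0 ∧ (∀ x : X, 0 ≤ v' x) ∧ LUsim L U v v'} := by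
  simp only [LUsim, wsat_Gv_iff]

/-- The set of valuations satisfying the distance graph `G⟨v⟩` is exactly the set
`{ v' : v ⊑_LU v' }` of valuations simulating `v`. -/
theorem sem_Gv_eq_up {X : Type*} (z : X) (L U : X → X → EReal) (v : X → ℝ)
    (hv : v z = 0) (hvpos : ∀ x : X, 0 ≤ v x) :
    {v' : X → ℝ | v' z = 0 ∧ (∀ x : X, 0 ≤ v' x) ∧
        ∀ x y : X, x ≠ y → wsat (v' x - v' y) (Gv L U v y x)}
      = {v' : X → ℝ | v' z = 0 ∧ (∀ x : X, 0 ≤ v' x) ∧ LUsim L U v v'} :=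
  sem_Gv_eq_up_general z L U v
end

section
/- If v ≼_M v' (with the M-bisimulation relation), then the tightness equivalence classes of v and v' coincide: for all clocks x, y, x ⊸* y holds in v iff x ⊸* y holds in v', where ⊸* is the reflexive-transitive closure of the relation x ⊸ y defined by −M ≤ v(y) − v(x) ≤ M. -/
/-- The relation `≼_M`. -/
def Msim {X : Type*} (M : ℕ) (v v' : X → ℝ) : Prop :=
  ∀ x y : X, x ≠ y →
    (v x - v y < -(M : ℝ) ∧ v' x - v' y < -(M : ℝ)) ∨
    (-(M : ℝ) ≤ v x - v y ∧ v x - v y = v' x - v' y ∧ v x - v y ≤ (M : ℝ)) ∨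
    ((M : ℝ) < v x - v y ∧ (M : ℝ) < v' x - v' y)

/-- Clocks `x, y` are tight in `v` (written `x ⊸ y`) if `-M ≤ v y - v x ≤ M`. -/
def Tight {X : Type*} (M : ℕ) (v : X → ℝ) (x y : X) : Prop :=
  -(M : ℝ) ≤ v y - v x ∧ v y - v x ≤ (M : ℝ)

theorem Tight.refl {X : Type*} (M : ℕ) (v : X → ℝ) (x : X) : Tight M v x x := by
  simp [Tight]

theorem Msim.tight_iff {X : Type*} {M : ℕ} {v v' : X → ℝ} (h : Msim M v v') (x y : X) :
    Tight M v x y ↔ Tight M v' x y := by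
  by_cases hxy : y = x
  · subst hxy
    exact iff_of_true (Tight.refl M v y) (Tight.refl M v' y)
  rcases h y x hxy with ⟨hlt, hlt'⟩ | ⟨-, heq, -⟩ | ⟨hgt, hgt'⟩
  · exact iff_of_false (fun t => by linarith [t.1]) (fun t => by linarith [t.1])
  · rw [Tight, Tight, heq]
  · exact iff_of_false (fun t => by linarith [t.2]) (fun t => by linarith [t.2])

theorem Msim.tight_eq {X : Type*} {M : ℕ} {v v' : X → ℝ} (h : Msim M v v') :
    Tight M v = Tight M v' := by
  funext x y
  exact propext (h.tight_iff x y)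

/-- If `v ≼_M v'` then the tightness equivalence classes coincide:
`x ⊸* y` in `v` iff `x ⊸* y` in `v'`. -/
theorem Msim_tight_classes_eq {X : Type*} (M : ℕ) (v v' : X → ℝ)
    (h : Msim M v v') (x y : X) :
    Relation.ReflTransGen (Tight M v) x y ↔ Relation.ReflTransGen (Tight M v') x y := by
  rw [h.tight_eq]
end

section
/- Let Z be a nonempty topologically closed zone with canonical distance graph G_Z, and let E = {y₁ → x₁, …, y_k → x_k} be a set of edges with pairwise distinct endpoints (all 2k vertices distinct) such that for each i the reverse edge x_i → y_i has finite weight in G_Z. Then the minimum over v ∈ Z of Σᵢ (v(xᵢ) − v(yᵢ)) is attained, and it is attained by an integral valuation v ∈ Z. -/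
/-!
Round with a random offset: for every `t` the valuation `x ↦ ⌊v x + t⌋ - ⌊v z + t⌋` is
integral, vanishes at the zero clock and still satisfies every integer difference constraint
of the zone. Since
`∫₀¹ ⌊a + t⌋ dt = a`, the objective of this rounding, averaged over `t`, equals the objective
of `v`, so some offset does at least as well as `v`. The objective values of integral
valuations are integers bounded below by `-∑ G(xᵢ, yᵢ)`, hence have a least element, and the
integral valuation realising it is a minimiser over the whole zone.
-/

/-- The zone defined by a (topologically closed) distance graph `G` over clocks `X`
with zero clock `z`: the edge `x → y` with finite weight `c` means `v y - v x ≤ c`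
(weight `⊤` means no constraint). -/
def zoneSem {X : Type*} (z : X) (G : X → X → WithTop ℤ) : Set (X → ℝ) :=
  {v | v z = 0 ∧ ∀ x y : X, ∀ c : ℤ, G x y = (c : WithTop ℤ) → v y - v x ≤ (c : ℝ)}

open MeasureTheory intervalIntegral Set

theorem intervalIntegrable_floor_add (a : ℝ) :
    IntervalIntegrable (fun t => (⌊a + t⌋ : ℝ)) volume 0 1 :=
  Monotone.intervalIntegrable fun _ _ hst => by gcongr

theorem integral_fract_add (a : ℝ) : ∫ t in (0 : ℝ)..1, Int.fract (a + t) = 1 / 2 := by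
  rw [integral_comp_add_left (fun s => Int.fract s), add_zero,
    (Int.fract_periodic ℝ).intervalIntegral_add_eq a 0, zero_add,
    integral_congr_Ioo_of_le zero_le_one fun s hs => Int.fract_eq_self.2 ⟨hs.1.le, hs.2⟩,
    integral_id]
  norm_num

theorem integral_floor_add (a : ℝ) : ∫ t in (0 : ℝ)..1, (⌊a + t⌋ : ℝ) = a := by
  have hid : IntervalIntegrable (fun t => a + t) volume 0 1 :=
    (continuous_const.add continuous_id).intervalIntegrable 0 1
  have hfract : IntervalIntegrable (fun t => Int.fract (a + t)) volume 0 1 := by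
    simpa only [Int.fract] using hid.sub (intervalIntegrable_floor_add a)
  simp_rw [← Int.self_sub_fract]
  rw [integral_sub hid hfract, integral_fract_add, integral_comp_add_left (fun s => s),
    integral_id]
  ring

theorem exists_sum_floor_add_sub_le {ι : Type*} (s : Finset ι) (a b : ι → ℝ) :
    ∃ t : ℝ, ∑ i ∈ s, ((⌊a i + t⌋ : ℝ) - ⌊b i + t⌋) ≤ ∑ i ∈ s, (a i - b i) := by
  have hint : ∀ i ∈ s, IntervalIntegrable (fun t => (⌊a i + t⌋ : ℝ) - ⌊b i + t⌋) volume 0 1 :=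
    fun i _ => (intervalIntegrable_floor_add (a i)).sub (intervalIntegrable_floor_add (b i))
  have hmean : ∫ t in (0 : ℝ)..1, ∑ i ∈ s, ((⌊a i + t⌋ : ℝ) - ⌊b i + t⌋)
      = ∑ i ∈ s, (a i - b i) := by
    rw [integral_finsetSum hint]
    refine Finset.sum_congr rfl fun i _ => ?_
    rw [integral_sub (intervalIntegrable_floor_add _) (intervalIntegrable_floor_add _),
      integral_floor_add, integral_floor_add]
  have hsum := integrable_finsetSum s fun i hi =>
    (intervalIntegrable_iff_integrableOn_Ioc_of_le zero_le_one).1 (hint i hi)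
  obtain ⟨t, ht⟩ := exists_le_average (μ := volume.restrict (Ioc (0 : ℝ) 1)) (by simp) hsum
  refine ⟨t, ht.trans_eq ?_⟩
  rw [← hmean, integral_of_le zero_le_one, setAverage_eq]
  simp

theorem exists_forall_le_of_dominated_by_int_valued {α : Type*} {Z : Set α} {P : α → Prop} {f : α → ℝ}
    (hne : Z.Nonempty) (hbdd : BddBelow (f '' Z)) (hint : ∀ v, P v → ∃ n : ℤ, f v = n)
    (hdom : ∀ u ∈ Z, ∃ w ∈ Z, P w ∧ f w ≤ f u) : ∃ v ∈ Z, P v ∧ ∀ u ∈ Z, f v ≤ f u := by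
  obtain ⟨b, hb⟩ := hbdd
  have hvalues_bdd : ∃ m : ℤ, ∀ n : ℤ, (∃ v ∈ Z, P v ∧ f v = n) → m ≤ n := by
    refine ⟨⌊b⌋, fun n ⟨v, hv, _, hvn⟩ => (Int.floor_le_floor ?_).trans_eq (Int.floor_intCast n)⟩
    exact hvn ▸ hb (mem_image_of_mem f hv)
  have hvalues_ne : ∃ n : ℤ, ∃ v ∈ Z, P v ∧ f v = n := by
    obtain ⟨u, hu⟩ := hne
    obtain ⟨w, hw, hPw, -⟩ := hdom u hu
    obtain ⟨n, hn⟩ := hint w hPw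
    exact ⟨n, w, hw, hPw, hn⟩
  obtain ⟨n, ⟨v, hv, hPv, hvn⟩, hleast⟩ := Int.exists_least_of_bdd hvalues_bdd hvalues_ne
  refine ⟨v, hv, hPv, fun u hu => ?_⟩
  obtain ⟨w, hw, hPw, hwu⟩ := hdom u hu
  obtain ⟨m, hm⟩ := hint w hPw
  calc f v = n := hvn
    _ ≤ m := by exact_mod_cast hleast m ⟨w, hw, hPw, hm⟩
    _ = f w := hm.symm
    _ ≤ f u := hwu

section Zone

variable {X : Type*} {z : X} {G : X → X → WithTop ℤ}

theorem floor_add_sub_floor_add_mem_zoneSem {v : X → ℝ} (hv : v ∈ zoneSem z G) (t : ℝ) :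
    (fun x => ((⌊v x + t⌋ - ⌊v z + t⌋ : ℤ) : ℝ)) ∈ zoneSem z G := by
  refine ⟨by simp, fun x y c hc => ?_⟩
  have hfloor : ⌊v y + t⌋ ≤ ⌊v x + t⌋ + c := by
    rw [← Int.floor_add_intCast]
    exact Int.floor_le_floor (by linarith [hv.2 x y c hc])
  rw [← Int.cast_sub, Int.cast_le]
  omega

theorem bddBelow_sum_sub_image_zoneSem {E : Finset (X × X)} (hrev : ∀ e ∈ E, G e.2 e.1 ≠ ⊤) :
    BddBelow ((fun u => ∑ e ∈ E, (u e.2 - u e.1)) '' zoneSem z G) := by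
  refine ⟨∑ e ∈ E, -(((G e.2 e.1).untopD 0 : ℤ) : ℝ), ?_⟩
  rintro _ ⟨u, hu, rfl⟩
  refine Finset.sum_le_sum fun e he => ?_
  obtain ⟨c, hc⟩ := WithTop.ne_top_iff_exists.1 (hrev e he)
  rw [← hc, WithTop.untopD_coe]
  linarith [hu.2 e.2 e.1 c hc.symm]

theorem exists_integral_mem_zoneSem_sum_sub_le (E : Finset (X × X)) {u : X → ℝ}
    (hu : u ∈ zoneSem z G) :
    ∃ w ∈ zoneSem z G, (∀ x : X, ∃ n : ℤ, w x = n) ∧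
      ∑ e ∈ E, (w e.2 - w e.1) ≤ ∑ e ∈ E, (u e.2 - u e.1) := by
  obtain ⟨t, ht⟩ := exists_sum_floor_add_sub_le E (fun e => u e.2) (fun e => u e.1)
  refine ⟨_, floor_add_sub_floor_add_mem_zoneSem hu t, fun x => ⟨_, rfl⟩, le_of_eq_of_le ?_ ht⟩
  refine Finset.sum_congr rfl fun e _ => ?_
  push_cast
  ring

end Zone

theorem minsum_attained_by_integral_valuation_general {X : Type*} (z : X)
    (G : X → X → WithTop ℤ)
    (hne : (zoneSem z G).Nonempty)
    (E : Finset (X × X))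
    (hrev : ∀ e ∈ E, G e.2 e.1 ≠ ⊤) :
    ∃ v ∈ zoneSem z G, (∀ x : X, ∃ n : ℤ, v x = (n : ℝ)) ∧
      ∀ u ∈ zoneSem z G,
        ∑ e ∈ E, (v e.2 - v e.1) ≤ ∑ e ∈ E, (u e.2 - u e.1) := by
  refine exists_forall_le_of_dominated_by_int_valued hne (bddBelow_sum_sub_image_zoneSem hrev)
    (fun v hv => ?_) fun u hu => exists_integral_mem_zoneSem_sum_sub_le E hu
  choose n hn using hv
  exact ⟨∑ e ∈ E, (n e.2 - n e.1), by simp [hn]⟩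

/-- Let `Z` be a nonempty topologically closed zone with canonical distance graph `G`,
and let `E` be a set of edges `y → x` with pairwise distinct endpoints, such that for
each edge `(y, x) ∈ E` the reverse edge `x → y` has finite weight in `G`.  Then the
minimum over `v ∈ Z` of `∑_{(y,x) ∈ E} (v x - v y)` is attained by an integral
valuation `v ∈ Z`. -/
theorem minsum_attained_by_integral_valuation {X : Type*} [DecidableEq X] (z : X)
    (G : X → X → WithTop ℤ)
    (hcanon : ∀ x y w : X, G x w ≤ G x y + G y w)
    (hne : (zoneSem z G).Nonempty)
    (E : Finset (X × X))
    (hloop : ∀ e ∈ E, e.1 ≠ e.2)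
    (hdisj : ∀ e ∈ E, ∀ e' ∈ E, e ≠ e' →
      e.1 ≠ e'.1 ∧ e.1 ≠ e'.2 ∧ e.2 ≠ e'.1 ∧ e.2 ≠ e'.2)
    (hrev : ∀ e ∈ E, G e.2 e.1 ≠ ⊤) :
    ∃ v ∈ zoneSem z G, (∀ x : X, ∃ n : ℤ, v x = (n : ℝ)) ∧
      ∀ u ∈ zoneSem z G,
        ∑ e ∈ E, (v e.2 - v e.1) ≤ ∑ e ∈ E, (u e.2 - u e.1) :=
  minsum_attained_by_integral_valuation_general z G hne E hrev
end
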